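/- arXiv:1508.01334 — 12 statements merged into one kernel-verified Lean document; each statement's English description precedes it below -/
import Mathlib

section
/- Let R be an involutive meadow satisfying the general inverse law (i.e., a cancellation meadow). Then the conditional fraction addition rule CFAR holds in R: for all x, u ∈ R and all y, v ∈ R with y ≠ 0 and v ≠ 0, x * inv y + u * inv v = (x * v + y * u) * inv (y * v). -/
/-- In a cancellation meadow (involutive meadow satisfying the
general inverse law), the conditional fraction addition rule CFAR holds. -/
theorem cfar_of_cancellation_meadow {R : Type*} [CommRing R] (inv : R → R)
    (refl_inv : ∀ x : R, inv (inv x) = x)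
    (ril : ∀ x : R, x * (x * inv x) = x)
    (gil : ∀ x : R, x ≠ 0 → x * inv x = 1) :
    ∀ x u y v : R, y ≠ 0 → v ≠ 0 →
      x * inv y + u * inv v = (x * v + y * u) * inv (y * v) := by
  intro x u y v hy hv
  have hone : (y * v) * (inv y * inv v) = 1 := by
    calc (y * v) * (inv y * inv v) = (y * inv y) * (v * inv v) := by ring
      _ = 1 := by rw [gil y hy, gil v hv]; ring
  have hyv : y * v ≠ 0 := by
    intro h
    rw [h, zero_mul] at hone
    apply hy
    calc y = y * 1 := by ring
      _ = 0 := by rw [← hone]; ring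
  have h1 : (y * v) * inv (y * v) = 1 := gil _ hyv
  have hinv : inv (y * v) = inv y * inv v := by
    calc inv (y * v) = ((y * v) * (inv y * inv v)) * inv (y * v) := by rw [hone]; ring
      _ = (inv y * inv v) * ((y * v) * inv (y * v)) := by ring
      _ = inv y * inv v := by rw [h1]; ring
  rw [hinv]
  calc x * inv y + u * inv v
      = x * inv y * (v * inv v) + u * inv v * (y * inv y) := by
        rw [gil v hv, gil y hy]; ring
    _ = (x * v + y * u) * (inv y * inv v) := by ring
end

section
/- Let R be an involutive meadow in which the conditional fraction addition rule CFAR holds: for all x, u ∈ R and all y, v ∈ R with y ≠ 0 and v ≠ 0, x * inv y + u * inv v = (x * v + y * u) * inv (y * v). Then R satisfies the general inverse law: for every x ∈ R with x ≠ 0, x * inv x = 1. -/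
/-- An involutive meadow satisfying CFAR satisfies the general
inverse law. -/
theorem gil_of_cfar {R : Type*} [CommRing R] (inv : R → R)
    (refl_inv : ∀ x : R, inv (inv x) = x)
    (ril : ∀ x : R, x * (x * inv x) = x)
    (cfar : ∀ x u y v : R, y ≠ 0 → v ≠ 0 →
      x * inv y + u * inv v = (x * v + y * u) * inv (y * v)) :
    ∀ x : R, x ≠ 0 → x * inv x = 1 := by
  intro x hx
  have h1 : (1 : R) ≠ 0 := by
    intro h
    exact hx (by rw [← mul_one x, h, mul_zero])
  have hinv1 : inv 1 = 1 := by simpa using ril 1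
  have hxe : x * (x * inv x) = x := ril x
  have hene : x * inv x ≠ 0 := by
    intro h
    exact hx (by rw [← hxe, h, mul_zero])
  have hee : (x * inv x) * (x * inv x) = x * inv x := by
    calc (x * inv x) * (x * inv x) = (x * (x * inv x)) * inv x := by ring
      _ = x * inv x := by rw [hxe]
  have hinve : inv (x * inv x) = x * inv x := by
    have h := cfar 0 1 x (x * inv x) hx hene
    simpa [hxe] using h
  have h := cfar 0 1 (x * inv x) 1 hene h1
  simp [hinv1, hinve] at h
  rw [← hee]
  exact h.symm
end

section
/- Let R be an involutive meadow satisfying the unconditional fraction addition rule FAR: for all x, y, u, v ∈ R, x * inv y + u * inv v = (x * v + y * u) * inv (y * v). Then R is trivial, i.e., (0 : R) = 1. -/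
/-- An involutive meadow satisfying the unconditional FAR is
trivial. -/
theorem trivial_of_far {R : Type*} [CommRing R] (inv : R → R)
    (refl_inv : ∀ x : R, inv (inv x) = x)
    (ril : ∀ x : R, x * (x * inv x) = x)
    (far : ∀ x y u v : R,
      x * inv y + u * inv v = (x * v + y * u) * inv (y * v)) :
    (0 : R) = 1 := by
  have h1 : inv 1 = 1 := by have := ril 1; simpa using this
  have h2 := far 1 1 1 0
  simp [h1] at h2
  exact h2.symm
end

section
/- In any involutive meadow R, the inverse operation is multiplicative: for all x, y ∈ R, inv (x * y) = inv x * inv y. -/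
/-- In a commutative ring, weak inverses are unique. -/
lemma weak_inv_unique {R : Type*} [CommRing R] (a u v : R)
    (h1 : a * u * a = a) (h2 : u * a * u = u)
    (h3 : a * v * a = a) (h4 : v * a * v = v) : u = v := by
  have e2 : (a*u)*(a*u) = a*u := by
    calc (a*u)*(a*u) = (a*u*a)*u := by ring
    _ = a*u := by rw [h1]
  have e2' : (a*v)*(a*v) = a*v := by
    calc (a*v)*(a*v) = (a*v*a)*v := by ring
    _ = a*v := by rw [h3]
  have e3 : u = v*(a*u) := by
    calc u = u*a*u := h2.symm
    _ = u*(a*v*a)*u := by rw [h3]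
    _ = v*((a*u)*(a*u)) := by ring
    _ = v*(a*u) := by rw [e2]
  have e4 : v = u*(a*v) := by
    calc v = v*a*v := h4.symm
    _ = v*(a*u*a)*v := by rw [h1]
    _ = u*((a*v)*(a*v)) := by ring
    _ = u*(a*v) := by rw [e2']
  have e5 : a*u = a*v := by
    calc a*u = a*(v*(a*u)) := by rw [← e3]
    _ = (a*u)*(a*v) := by ring
    _ = a*(u*(a*v)) := by ring
    _ = a*v := by rw [← e4]
  calc u = v*(a*u) := e3
  _ = v*(a*v) := by rw [e5]
  _ = v*a*v := by ring
  _ = v := h4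

/-- In any involutive meadow, inverse is multiplicative. -/
theorem inv_mul_meadow {R : Type*} [CommRing R] (inv : R → R)
    (refl_inv : ∀ x : R, inv (inv x) = x)
    (ril : ∀ x : R, x * (x * inv x) = x) :
    ∀ x y : R, inv (x * y) = inv x * inv y := by
  -- L1 : inv x * x * inv x = inv x
  have L1 : ∀ x : R, inv x * x * inv x = inv x := by
    intro x
    have h := ril (inv x)
    rw [refl_inv] at h
    linear_combination h
  intro x y
  apply weak_inv_unique (x*y) (inv (x*y)) (inv x * inv y)
  · linear_combination ril (x*y)
  · exact L1 (x*y)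
  · calc (x*y) * (inv x * inv y) * (x*y) = (x * (x * inv x)) * (y * (y * inv y)) := by ring
    _ = x * y := by rw [ril x, ril y]
  · calc (inv x * inv y) * (x*y) * (inv x * inv y)
        = (inv x * x * inv x) * (inv y * y * inv y) := by ring
    _ = inv x * inv y := by rw [L1 x, L1 y]
end

section
/- In any involutive meadow R, the fraction multiplication rule holds unconditionally: for all x, y, u, v ∈ R, (x * inv y) * (u * inv v) = (x * u) * inv (y * v). -/
/-- In any involutive meadow, the fraction multiplication rule
holds unconditionally. -/
theorem frac_mul_meadow {R : Type*} [CommRing R] (inv : R → R)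
    (refl_inv : ∀ x : R, inv (inv x) = x)
    (ril : ∀ x : R, x * (x * inv x) = x) :
    ∀ x y u v : R, (x * inv y) * (u * inv v) = (x * u) * inv (y * v) := by
  -- reversed restricted inverse law: inv x * (inv x * x) = inv x
  have ril' : ∀ x : R, inv x * (inv x * x) = inv x := by
    intro x
    have h := ril (inv x)
    rwa [refl_inv x] at h
  -- uniqueness of the quasi-inverse
  have key : ∀ x a b : R, x * (x * a) = x → a * (a * x) = a →
      x * (x * b) = x → b * (b * x) = b → a = b := by
    intro x a b h1 h2 h3 h4
    linear_combination (x*b - 1) * h2 - a*a*h3 - (x*a - 1) * h4 + b*b*h1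
  intro x y u v
  have hmul : inv (y * v) = inv y * inv v := by
    apply key (y * v)
    · exact ril (y * v)
    · exact ril' (y * v)
    · linear_combination (v * (v * inv v)) * ril y + y * ril v
    · linear_combination (inv v * (inv v * v)) * ril' y + inv y * ril' v
  rw [hmul]; ring
end

section
/- In any involutive meadow R, the fraction inversion rule holds unconditionally: for all x, y ∈ R, inv (x * inv y) = y * inv x (i.e., (x/y)⁻¹ = y/x). -/
/-- In any involutive meadow, (x/y)⁻¹ = y/x unconditionally. -/
theorem frac_inv_meadow {R : Type*} [CommRing R] (inv : R → R)
    (refl_inv : ∀ x : R, inv (inv x) = x)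
    (ril : ∀ x : R, x * (x * inv x) = x) :
    ∀ x y : R, inv (x * inv y) = y * inv x := by
  have ril' : ∀ z : R, inv z * (inv z * z) = inv z := by
    intro z
    have h := ril (inv z)
    rwa [refl_inv] at h
  intro x y
  set z : R := x * inv y with hz
  set b : R := y * inv x with hb
  have ha1 : z * (z * inv z) = z := ril z
  have ha2 : inv z * (inv z * z) = inv z := ril' z
  have hb1 : z * (z * b) = z := by
    simp only [hz, hb]
    linear_combination (inv y * inv y * y) * ril x + x * ril' y
  have hb2 : b * (b * z) = b := by
    simp only [hz, hb]
    linear_combination (inv x * inv x * x) * ril y + y * ril' x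
  -- uniqueness of the group inverse: inv z = inv z * z * b = b * z * inv z = b
  linear_combination (z * b - 1) * ha2 - (inv z)^2 * hb1 + (1 - z * inv z) * hb2 + b^2 * ha1
end

section
/- In any involutive meadow R, the rule DIV1 holds unconditionally: for all x, y, z ∈ R, (x * inv y) * inv z = x * inv (y * z) (i.e., (x/y)/z = x/(y·z), with no nonzeroness condition on y or z). -/
private lemma meadow_inv_unique {R : Type*} [CommRing R] (a b c : R)
    (hb : b * (b * a) = b) (hab : a * (a * b) = a)
    (hc : c * (c * a) = c) (hac : a * (a * c) = a) : b = c := by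
  have h1 : b = b * (a * c) := by
    calc b = b * (b * a) := hb.symm
    _ = b * (b * (a * (a * c))) := by rw [hac]
    _ = (b * (b * a)) * (a * c) := by ring
    _ = b * (a * c) := by rw [hb]
  have h2 : c = c * (a * b) := by
    calc c = c * (c * a) := hc.symm
    _ = c * (c * (a * (a * b))) := by rw [hab]
    _ = (c * (c * a)) * (a * b) := by ring
    _ = c * (a * b) := by rw [hc]
  calc b = b * (a * c) := h1
  _ = c * (a * b) := by ring
  _ = c := h2.symm

/-- In any involutive meadow, DIV1 holds unconditionally:
(x/y)/z = x/(y·z). -/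
theorem div1_meadow {R : Type*} [CommRing R] (inv : R → R)
    (refl_inv : ∀ x : R, inv (inv x) = x)
    (ril : ∀ x : R, x * (x * inv x) = x) :
    ∀ x y z : R, (x * inv y) * inv z = x * inv (y * z) := by
  have L1 : ∀ x : R, inv x * (inv x * x) = inv x := fun x => by
    have h := ril (inv x); rwa [refl_inv] at h
  have key : ∀ y z : R, inv (y * z) = inv y * inv z := by
    intro y z
    refine meadow_inv_unique (y * z) _ _ (L1 (y*z)) (ril (y*z)) ?_ ?_
    · linear_combination (inv z * (inv z * z)) * L1 y + inv y * L1 z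
    · linear_combination (z * (z * inv z)) * ril y + y * ril z
  intro x y z
  rw [key]; ring
end

section
/- In any involutive meadow R, the rule DIV2 holds unconditionally: for all x, y, z ∈ R, x * inv (y * inv z) = (x * z * z) * inv (y * z) (i.e., x/(y/z) = (x·z·z)/(y·z), with no nonzeroness condition on y or z). -/
/-- In any involutive meadow, DIV2 holds unconditionally:
x/(y/z) = (x·z·z)/(y·z). -/
theorem div2_meadow {R : Type*} [CommRing R] (inv : R → R)
    (refl_inv : ∀ x : R, inv (inv x) = x)
    (ril : ∀ x : R, x * (x * inv x) = x) :
    ∀ x y z : R, x * inv (y * inv z) = (x * z * z) * inv (y * z) := by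
  -- uniqueness of weak inverses
  have uniq : ∀ a b c : R, a*a*b = a → b*b*a = b → a*a*c = a → c*c*a = c → b = c := by
    intro a b c h1 h2 h3 h4
    have hb : b = b*a*c := by
      calc b = b*b*a := h2.symm
        _ = b*b*(a*a*c) := by rw [h3]
        _ = (b*b*a)*(a*c) := by ring
        _ = b*(a*c) := by rw [h2]
        _ = b*a*c := by ring
    have hc : c = c*a*b := by
      calc c = c*c*a := h4.symm
        _ = c*c*(a*a*b) := by rw [h1]
        _ = (c*c*a)*(a*b) := by ring
        _ = c*(a*b) := by rw [h4]
        _ = c*a*b := by ring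
    calc b = b*a*c := hb
      _ = c*a*b := by ring
      _ = c := hc.symm
  have mul_inv : ∀ a b : R, inv (a*b) = inv a * inv b := by
    intro a b
    have ha := ril a
    have hb := ril b
    have hia := ril (inv a)
    have hib := ril (inv b)
    rw [refl_inv] at hia hib
    apply uniq (a*b)
    · linear_combination ril (a*b)
    · have h := ril (inv (a*b))
      rw [refl_inv] at h
      linear_combination h
    · linear_combination (b*(b*inv b) - b) * ha + a * hb + b * ha
    · linear_combination (inv b*(inv b*b) - inv b) * hia + inv a * hib + inv b * hia
  intro x y z
  rw [mul_inv, refl_inv, mul_inv]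
  linear_combination (- x * inv y) * ril z
end

section
/- In any field F (with the convention 0⁻¹ = 0, so division is total), the rule DIV2 holds unconditionally: for all x, y, z ∈ F, x / (y / z) = (x * z * z) / (y * z), including when y or z equals 0. -/
/-- In any field (with total division, 0⁻¹ = 0), DIV2 holds
unconditionally: x/(y/z) = (x·z·z)/(y·z). -/
theorem div2_field {F : Type*} [Field F] :
    ∀ x y z : F, x / (y / z) = (x * z * z) / (y * z) := by
  intro x y z
  rcases eq_or_ne z 0 with hz | hz
  · simp [hz]
  rcases eq_or_ne y 0 with hy | hy
  · simp [hy]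
  field_simp
end

section
/- In any cancellation meadow R, the fraction equivalence rule FEQ holds: for all x, y ∈ R and all z ∈ R with z ≠ 0, x * inv y = (x * z) * inv (y * z). -/
/-- In any cancellation meadow, the fraction equivalence rule
FEQ holds: x/y = (x·z)/(y·z) for z ≠ 0. -/
theorem feq_cancellation_meadow {R : Type*} [CommRing R] (inv : R → R)
    (refl_inv : ∀ x : R, inv (inv x) = x)
    (ril : ∀ x : R, x * (x * inv x) = x)
    (gil : ∀ x : R, x ≠ 0 → x * inv x = 1) :
    ∀ x y z : R, z ≠ 0 → x * inv y = (x * z) * inv (y * z) := by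
  intro x y z hz
  by_cases h1 : (1:R) = 0
  · have hall : ∀ a : R, a = 0 := fun a => by rw [← one_mul a, h1, zero_mul]
    rw [hall (x * inv y), hall ((x * z) * inv (y * z))]
  by_cases hy : y = 0
  · subst hy
    have h0 : inv 0 = (0:R) := by
      by_contra h
      have hg := gil _ h
      rw [refl_inv, mul_zero] at hg
      exact h1 hg.symm
    simp [h0]
  · have hyz : y * z ≠ 0 := by
      intro h
      have : (1:R) = 0 := by
        calc (1:R) = (y * inv y) * (z * inv z) := by rw [gil y hy, gil z hz]; ring
          _ = (y * z) * (inv y * inv z) := by ring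
          _ = 0 := by rw [h, zero_mul]
      exact h1 this
    have h2 := gil _ hyz
    have h3 := gil y hy
    calc x * inv y = x * inv y * ((y * z) * inv (y * z)) := by rw [h2]; ring
      _ = (x * z) * inv (y * z) * (y * inv y) := by ring
      _ = (x * z) * inv (y * z) := by rw [h3]; ring
end

section
/- Let R be a commutative ring equipped with a binary division operation d : R → R → R such that d x 1 = x for all x, and such that the unconditional fraction addition rule FAR holds: d x y + d u v = d (x * v + y * u) (y * v) for all x, y, u, v. Then d 1 0 is an additive sink: for every u ∈ R, u + d 1 0 = d 1 0. -/
/-- If a binary division d on a commutative ring satisfies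
d x 1 = x and the unconditional FAR, then d 1 0 is an additive sink. -/
theorem one_div_zero_add_sink {R : Type*} [CommRing R] (d : R → R → R)
    (hd1 : ∀ x : R, d x 1 = x)
    (far : ∀ x y u v : R, d x y + d u v = d (x * v + y * u) (y * v)) :
    ∀ u : R, u + d 1 0 = d 1 0 := by
  intro u
  have := far u 1 1 0
  simp [hd1] at this
  simpa using this
end

section
/- For all integers p, r, q with q ≠ 0, the fracpair obtained by applying the gcd-modified conditional fraction addition rule CFARfp to the fracpairs (p, q) and (r, q), namely the pair with numerator (p * q + q * r) / gcd(q, q) and denominator (q * q) / gcd(q, q) (integer division), is equivalent under cross-multiplication to the fracpair (p + r, q): ((p * q + q * r) / (gcd q q : ℤ)) * q = ((q * q) / (gcd q q : ℤ)) * (p + r), and moreover the resulting denominator (q * q) / (gcd q q : ℤ) is nonzero. -/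
/-- Each closed instance of CQCRfp follows from the gcd-modified
CFARfp: for integers p, r, q with q ≠ 0, the fracpair
((p*q + q*r)/gcd(q,q), (q*q)/gcd(q,q)) is cross-multiplication equivalent to
(p + r, q), and its denominator is nonzero. -/
theorem cqcrfp_of_cfarfp (p r q : ℤ) (hq : q ≠ 0) :
    ((p * q + q * r) / (Int.gcd q q : ℤ)) * q
      = ((q * q) / (Int.gcd q q : ℤ)) * (p + r)
    ∧ (q * q) / (Int.gcd q q : ℤ) ≠ 0 := by
  have hg : (Int.gcd q q : ℤ) = |q| := by
    rw [Int.gcd_self, Int.abs_eq_natAbs]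
  have habs : |q| ∣ q := (abs_dvd _ _).mpr dvd_rfl
  have hnum : p * q + q * r = q * (p + r) := by ring
  have hden : (q * q) / (Int.gcd q q : ℤ) = |q| := by
    rw [hg]
    rcases abs_choice q with h | h
    · rw [h]; exact Int.mul_ediv_cancel_left _ hq
    · rw [h]
      rw [show q * q = -q * -q by ring]
      exact Int.mul_ediv_cancel_left _ (neg_ne_zero.mpr hq)
  constructor
  · rw [hnum, hg, mul_comm q (p + r), Int.mul_ediv_assoc _ habs,
      Int.mul_ediv_assoc _ habs]
    ring
  · rw [hden]
    simpa using hq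
end
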